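/- Let ε = (ε_ij) be a smooth symmetric second-order tensor field on ℝ³. Then its Saint-Venant tensor W vanishes identically on ℝ³ if and only if its incompatibility tensor Inc ε vanishes identically on ℝ³. -/

import Mathlib

/-- The partial derivative `∂_i f` of a scalar field on `ℝ³`. -/
noncomputable def pd (i : Fin 3) (f : (Fin 3 → ℝ) → ℝ) : (Fin 3 → ℝ) → ℝ :=
  fun x => fderiv ℝ f x (Pi.single i 1)

/-- The Levi-Civita symbol `ϵ_ijk` on three indices. -/
noncomputable def lc3 (i j k : Fin 3) : ℝ :=
  (((i : ℕ) : ℝ) - ((j : ℕ) : ℝ)) * (((j : ℕ) : ℝ) - ((k : ℕ) : ℝ))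
    * (((k : ℕ) : ℝ) - ((i : ℕ) : ℝ)) / 2

/-- The Saint-Venant tensor
`W_ijkl = ∂_l∂_k ε_ij − ∂_l∂_i ε_jk + ∂_i∂_j ε_kl − ∂_k∂_j ε_il`. -/
noncomputable def SV (ε : Fin 3 → Fin 3 → (Fin 3 → ℝ) → ℝ) (i j k l : Fin 3) :
    (Fin 3 → ℝ) → ℝ :=
  fun x => pd l (pd k (ε i j)) x - pd l (pd i (ε j k)) x
    + pd i (pd j (ε k l)) x - pd k (pd j (ε i l)) x

/-- The incompatibility tensor `(Inc ε)_kl = Σ ϵ_kpi ϵ_lrj ∂_p∂_r ε_ij`. -/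
noncomputable def Inc (ε : Fin 3 → Fin 3 → (Fin 3 → ℝ) → ℝ) (k l : Fin 3) :
    (Fin 3 → ℝ) → ℝ :=
  fun x => ∑ p, ∑ i, ∑ r, ∑ j, lc3 k p i * lc3 l r j * pd p (pd r (ε i j)) x

/-- Second partial derivatives of a smooth function commute (Schwarz). -/
lemma pd_comm {f : (Fin 3 → ℝ) → ℝ} (hf : ContDiff ℝ (⊤ : ℕ∞) f) (p r : Fin 3) (x : Fin 3 → ℝ) :
    pd p (pd r f) x = pd r (pd p f) x := by
  have hdf : Differentiable ℝ (fderiv ℝ f) :=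
    (hf.fderiv_right (m := 1) (WithTop.coe_le_coe.mpr le_top)).differentiable one_ne_zero
  have hsymm := second_derivative_symmetric
      (fun y => (hf.differentiable (by simp) y).hasFDerivAt) ((hdf x).hasFDerivAt)
  have key : ∀ a b : Fin 3, pd a (pd b f) x
      = fderiv ℝ (fderiv ℝ f) x (Pi.single a 1) (Pi.single b 1) := by
    intro a b
    have h1 : HasFDerivAt (⇑(ContinuousLinearMap.apply ℝ ℝ (Pi.single b (1:ℝ))) ∘ fderiv ℝ f)
        ((ContinuousLinearMap.apply ℝ ℝ (Pi.single b (1:ℝ))).comp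
          (fderiv ℝ (fderiv ℝ f) x)) x :=
      (ContinuousLinearMap.hasFDerivAt _).comp x (hdf x).hasFDerivAt
    show fderiv ℝ (pd b f) x (Pi.single a 1) = _
    have hpd : pd b f = ⇑(ContinuousLinearMap.apply ℝ ℝ (Pi.single b (1:ℝ))) ∘ fderiv ℝ f := rfl
    rw [hpd, h1.fderiv]
    rfl
  rw [key, key, hsymm]

set_option maxHeartbeats 2000000 in
/-- Combinatorial core: for a quadruply-indexed family with the two symmetries
of second derivatives of a symmetric tensor field, the Saint-Venant combination
vanishes iff the incompatibility combination vanishes. -/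
lemma sv_iff_inc_core (d : Fin 3 → Fin 3 → Fin 3 → Fin 3 → ℝ)
    (h1 : ∀ i j p r, d i j p r = d j i p r)
    (h2 : ∀ i j p r, d i j p r = d i j r p) :
    (∀ i j k l, d i j l k - d j k l i + d k l i j - d i l k j = 0) ↔
    (∀ k l : Fin 3, ∑ p, ∑ i, ∑ r, ∑ j, lc3 k p i * lc3 l r j * d i j p r = 0) := by
  have g0 : ∀ h : (0:ℕ) < 3, (⟨0, h⟩ : Fin 3) = 0 := fun _ => rfl
  have g1 : ∀ h : (1:ℕ) < 3, (⟨1, h⟩ : Fin 3) = 1 := fun _ => rfl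
  have g2 : ∀ h : (2:ℕ) < 3, (⟨2, h⟩ : Fin 3) = 2 := fun _ => rfl
  have e1 : ∀ p r, d 1 0 p r = d 0 1 p r := fun p r => h1 1 0 p r
  have e2 : ∀ p r, d 2 0 p r = d 0 2 p r := fun p r => h1 2 0 p r
  have e3 : ∀ p r, d 2 1 p r = d 1 2 p r := fun p r => h1 2 1 p r
  have f1 : ∀ i j, d i j 1 0 = d i j 0 1 := fun i j => h2 i j 1 0
  have f2 : ∀ i j, d i j 2 0 = d i j 0 2 := fun i j => h2 i j 2 0
  have f3 : ∀ i j, d i j 2 1 = d i j 1 2 := fun i j => h2 i j 2 1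
  constructor
  · intro H k l
    have A := H 1 1 2 2
    have B := H 0 1 2 2
    have C := H 0 0 2 2
    have D := H 0 1 1 2
    have E := H 0 0 1 2
    have F := H 0 0 1 1
    simp only [e1, e2, e3, f1, f2, f3] at A B C D E F
    fin_cases k <;> fin_cases l <;>
      · simp only [Fin.sum_univ_three, g0, g1, g2]
        norm_num [lc3]
        try simp only [e1, e2, e3, f1, f2, f3]
        linarith [A, B, C, D, E, F]
  · intro H i j k l
    have I00 := H 0 0
    have I01 := H 0 1
    have I02 := H 0 2
    have I11 := H 1 1
    have I12 := H 1 2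
    have I22 := H 2 2
    simp only [Fin.sum_univ_three] at I00 I01 I02 I11 I12 I22
    norm_num [lc3] at I00 I01 I02 I11 I12 I22
    simp only [e1, e2, e3, f1, f2, f3] at I00 I01 I02 I11 I12 I22
    fin_cases i <;> fin_cases j <;> fin_cases k <;> fin_cases l <;>
      · simp only [g0, g1, g2]
        try simp only [e1, e2, e3, f1, f2, f3]
        linarith [I00, I01, I02, I11, I12, I22]

/-- In dimension 3, the Saint-Venant tensor of a smooth symmetric second-order
tensor field vanishes identically if and only if its incompatibility tensor
vanishes identically. -/
theorem saint_venant_zero_iff_inc_zero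
    (ε : Fin 3 → Fin 3 → (Fin 3 → ℝ) → ℝ)
    (hsm : ∀ i j, ContDiff ℝ (⊤ : ℕ∞) (ε i j))
    (hsym : ∀ i j, ε i j = ε j i) :
    (∀ (i j k l : Fin 3) (x : Fin 3 → ℝ), SV ε i j k l x = 0) ↔
    (∀ (k l : Fin 3) (x : Fin 3 → ℝ), Inc ε k l x = 0) := by
  have core : ∀ x : Fin 3 → ℝ,
      (∀ i j k l : Fin 3, SV ε i j k l x = 0) ↔ (∀ k l : Fin 3, Inc ε k l x = 0) := by
    intro x
    have h1 : ∀ i j p r : Fin 3,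
        pd p (pd r (ε i j)) x = pd p (pd r (ε j i)) x := by
      intro i j p r; rw [hsym i j]
    have h2 : ∀ i j p r : Fin 3,
        pd p (pd r (ε i j)) x = pd r (pd p (ε i j)) x := by
      intro i j p r; exact pd_comm (hsm i j) p r x
    have := sv_iff_inc_core (fun i j p r => pd p (pd r (ε i j)) x)
      (fun i j p r => h1 i j p r) (fun i j p r => h2 i j p r)
    simpa [SV, Inc] using this
  constructor
  · intro H k l x
    exact (core x).1 (fun i j k l => H i j k l x) k l
  · intro H i j k l x
    exact (core x).2 (fun k l => H k l x) i j k l
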